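/- arXiv:1811.02461 — 5 statements merged into one kernel-verified Lean document; each statement's English description precedes it below -/
import Mathlib

section
/- Let n ≥ m ≥ 1 and let S ⊂ Λ(m,n)^♯ be a slice. If σ ∈ S is a minimal element of S, then the set μ_σ^R(S) = (S \ {σ}) ∪ {Φ^{-1}(σ)} is again a slice, and Φ^{-1}(σ) is a maximal element of μ_σ^R(S). -/
/-- The set `Λ(m,n)` of paracyclic `m`-simplices: monotone maps `f : ℤ → ℤ`
satisfying `f(i+m+1) = f(i)+n+1`, partially ordered pointwise. -/
def Para (m n : ℕ) : Type :=
  {f : ℤ → ℤ // Monotone f ∧ ∀ i : ℤ, f (i + (m + 1)) = f i + (n + 1)}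

noncomputable instance (m n : ℕ) : PartialOrder (Para m n) :=
  Subtype.partialOrder _

/-- The Heller automorphism `Σ(σ)(i) = σ(i+1)`. -/
def heller (m n : ℕ) (σ : Para m n) : Para m n :=
  ⟨fun i => σ.1 (i + 1),
    fun _ _ h => σ.2.1 (by omega),
    fun i => by
      have h := σ.2.2 (i + 1)
      calc σ.1 (i + (m + 1) + 1) = σ.1 (i + 1 + (m + 1)) := by ring_nf
        _ = σ.1 (i + 1) + (n + 1) := h⟩

/-- The Coxeter automorphism `Φ(σ)(i) = σ(i) - 1`. -/
def coxeter (m n : ℕ) (σ : Para m n) : Para m n :=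
  ⟨fun i => σ.1 i - 1,
    fun a b h => by show σ.1 a - 1 ≤ σ.1 b - 1; have := σ.2.1 h; omega,
    fun i => by show σ.1 (i + (m + 1)) - 1 = σ.1 i - 1 + (n + 1); have := σ.2.2 i; omega⟩
/-- The inverse Coxeter automorphism `Φ⁻¹(σ)(i) = σ(i) + 1`. -/
def coxeterInv (m n : ℕ) (σ : Para m n) : Para m n :=
  ⟨fun i => σ.1 i + 1,
    fun a b h => by show σ.1 a + 1 ≤ σ.1 b + 1; have := σ.2.1 h; omega,
    fun i => by show σ.1 (i + (m + 1)) + 1 = σ.1 i + 1 + (n + 1); have := σ.2.2 i; omega⟩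

/-- `σ` and `τ` lie in the same `Φ`-orbit. -/
def sameOrbit (m n : ℕ) (σ τ : Para m n) : Prop :=
  ∃ k : ℤ, ∀ i : ℤ, τ.1 i = σ.1 i - k

/-- A slice in `Λ(m,n)^♯`: a finite set of strictly monotone (non-degenerate)
paracyclic simplices containing exactly one representative of each `Φ`-orbit and
convex in `Λ(m,n)^♯`. -/
def IsSlice (m n : ℕ) (S : Set (Para m n)) : Prop :=
  S.Finite ∧
  (∀ σ ∈ S, StrictMono σ.1) ∧
  (∀ τ : Para m n, StrictMono τ.1 → ∃! ρ : Para m n, ρ ∈ S ∧ sameOrbit m n τ ρ) ∧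
  (∀ σ ∈ S, ∀ τ ∈ S, ∀ ρ : Para m n, StrictMono ρ.1 → σ ≤ ρ → ρ ≤ τ → ρ ∈ S)

/-!
Write `σ⁺ = Φ⁻¹(σ)` and `S' = (S \ {σ}) ∪ {σ⁺}`. Since `σ⁺` lies in the orbit of `σ`, replacing `σ` by
`σ⁺` keeps exactly one representative per orbit. The key fact is that `σ⁺ ≤ τ` never holds for
`σ, τ ∈ S`: otherwise `σ ≤ Φ(τ) ≤ τ`, so `Φ(τ) ∈ S` by convexity, and `Φ(τ) ≠ τ` are two
representatives of one orbit. This gives the maximality of `σ⁺` and rules out intervals of `S'`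
starting at `σ⁺`. For an interval `a ≤ ρ ≤ σ⁺` with `a ∈ S \ {σ}`, let `ρ - k` be the
representative of `ρ` in `S`: if `k ≤ 0`, convexity of `S` puts `ρ` into `S`; if `k > 0`, then
`ρ - k ≤ σ`, so `ρ - k = σ` by minimality of `σ`, and `ρ ≤ σ⁺` forces `k = 1`, i.e. `ρ = σ⁺`.
-/

section

variable {m n : ℕ}

namespace Para

theorem le_iff {a b : Para m n} : a ≤ b ↔ ∀ i, a.1 i ≤ b.1 i := Iff.rfl

theorem ext {a b : Para m n} (h : ∀ i, a.1 i = b.1 i) : a = b :=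
  Subtype.ext (funext h)

end Para

@[simp]
theorem coxeter_apply (σ : Para m n) (i : ℤ) : (coxeter m n σ).1 i = σ.1 i - 1 := rfl

@[simp]
theorem coxeterInv_apply (σ : Para m n) (i : ℤ) : (coxeterInv m n σ).1 i = σ.1 i + 1 := rfl

theorem strictMono_coxeter {σ : Para m n} (hσ : StrictMono σ.1) :
    StrictMono (coxeter m n σ).1 :=
  fun _ _ hab => sub_lt_sub_right (hσ hab) 1

theorem strictMono_coxeterInv {σ : Para m n} (hσ : StrictMono σ.1) :
    StrictMono (coxeterInv m n σ).1 :=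
  hσ.add_const 1

theorem coxeter_le (σ : Para m n) : coxeter m n σ ≤ σ :=
  Para.le_iff.2 fun i => by simp

theorem coxeter_ne (σ : Para m n) : coxeter m n σ ≠ σ := fun h => by
  have := congrArg (fun τ : Para m n => τ.1 0) h
  simp at this

namespace sameOrbit

theorem refl (σ : Para m n) : sameOrbit m n σ σ := ⟨0, fun _ => by ring⟩

theorem symm {σ τ : Para m n} : sameOrbit m n σ τ → sameOrbit m n τ σ :=
  fun ⟨k, hk⟩ => ⟨-k, fun i => by rw [hk]; ring⟩

theorem trans {σ τ ρ : Para m n} :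
    sameOrbit m n σ τ → sameOrbit m n τ ρ → sameOrbit m n σ ρ :=
  fun ⟨k, hk⟩ ⟨l, hl⟩ => ⟨k + l, fun i => by rw [hl, hk]; ring⟩

end sameOrbit

theorem sameOrbit_coxeter (σ : Para m n) : sameOrbit m n σ (coxeter m n σ) :=
  ⟨1, fun _ => rfl⟩

theorem sameOrbit_coxeterInv (σ : Para m n) : sameOrbit m n σ (coxeterInv m n σ) :=
  ⟨-1, fun _ => by simp⟩

theorem existsUnique_sameOrbit_replace {S : Set (Para m n)} {x y τ : Para m n} (hx : x ∈ S)
    (hxy : sameOrbit m n x y) (h : ∃! ρ, ρ ∈ S ∧ sameOrbit m n τ ρ) :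
    ∃! ρ, ρ ∈ (S \ {x}) ∪ {y} ∧ sameOrbit m n τ ρ := by
  obtain ⟨ρ, ⟨hρS, hτρ⟩, hρ⟩ := h
  by_cases hρx : ρ = x
  · subst hρx
    refine ⟨y, ⟨Or.inr rfl, hτρ.trans hxy⟩, ?_⟩
    rintro z ⟨⟨hzS, hzρ⟩ | rfl, hτz⟩
    · exact absurd (hρ z ⟨hzS, hτz⟩) hzρ
    · rfl
  · refine ⟨ρ, ⟨Or.inl ⟨hρS, hρx⟩, hτρ⟩, ?_⟩
    rintro z ⟨⟨hzS, -⟩ | rfl, hτz⟩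
    · exact hρ z ⟨hzS, hτz⟩
    · exact absurd (hρ x ⟨hx, hτz.trans hxy.symm⟩).symm hρx

/-- The right mutation `μ_σ^R(S)`. -/
def rightMutation (S : Set (Para m n)) (σ : Para m n) : Set (Para m n) :=
  (S \ {σ}) ∪ {coxeterInv m n σ}

namespace IsSlice

variable {S : Set (Para m n)}

theorem eq_of_sameOrbit (hS : IsSlice m n S) {ρ₁ ρ₂ : Para m n} (h₁ : ρ₁ ∈ S) (h₂ : ρ₂ ∈ S)
    (h : sameOrbit m n ρ₁ ρ₂) : ρ₁ = ρ₂ :=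
  (hS.2.2.1 ρ₁ (hS.2.1 ρ₁ h₁)).unique ⟨h₁, sameOrbit.refl ρ₁⟩ ⟨h₂, h⟩

theorem not_coxeterInv_le (hS : IsSlice m n S) {σ τ : Para m n} (hσ : σ ∈ S) (hτ : τ ∈ S) :
    ¬ coxeterInv m n σ ≤ τ := by
  intro hle
  have hστ : σ ≤ coxeter m n τ := Para.le_iff.2 fun i => by
    have := Para.le_iff.1 hle i
    simp only [coxeter_apply, coxeterInv_apply] at this ⊢
    omega
  have hΦτ : coxeter m n τ ∈ S :=
    hS.2.2.2 σ hσ τ hτ _ (strictMono_coxeter (hS.2.1 τ hτ)) hστ (coxeter_le τ)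
  exact coxeter_ne τ (hS.eq_of_sameOrbit hτ hΦτ (sameOrbit_coxeter τ)).symm

theorem mem_rightMutation_of_le {σ a ρ : Para m n} (hmin : ∀ τ ∈ S, τ ≤ σ → τ = σ)
    (ha : a ∈ S) (haσ : a ≠ σ) (haρ : a ≤ ρ) (hρ : ρ ∈ S) : ρ ∈ rightMutation S σ :=
  Or.inl ⟨hρ, by rintro rfl; exact haσ (hmin a ha haρ)⟩

theorem mem_rightMutation_of_le_coxeterInv (hS : IsSlice m n S) {σ a ρ : Para m n}
    (hmin : ∀ τ ∈ S, τ ≤ σ → τ = σ) (ha : a ∈ S) (haσ : a ≠ σ) (hρ : StrictMono ρ.1)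
    (haρ : a ≤ ρ) (hρσ : ρ ≤ coxeterInv m n σ) : ρ ∈ rightMutation S σ := by
  obtain ⟨τ, ⟨hτ, k, hk⟩, -⟩ := hS.2.2.1 ρ hρ
  have hρσ' (i : ℤ) : ρ.1 i ≤ σ.1 i + 1 := Para.le_iff.1 hρσ i
  rcases le_or_gt k 0 with hk0 | hk0
  · have hρτ : ρ ≤ τ := Para.le_iff.2 fun i => by have := hk i; omega
    exact mem_rightMutation_of_le hmin ha haσ haρ (hS.2.2.2 a ha τ hτ ρ hρ haρ hρτ)
  · have hτσ : τ = σ := hmin τ hτ <| Para.le_iff.2 fun i => by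
      have := hk i; have := hρσ' i; omega
    subst hτσ
    have hk1 : k = 1 := by have := hk 0; have := hρσ' 0; omega
    subst hk1
    exact Or.inr <| Para.ext fun i => by have := hk i; simp only [coxeterInv_apply]; omega

theorem rightMutation_isSlice (hS : IsSlice m n S) {σ : Para m n} (hσ : σ ∈ S)
    (hmin : ∀ τ ∈ S, τ ≤ σ → τ = σ) : IsSlice m n (rightMutation S σ) := by
  have ⟨hfin, hstrict, horb, hconv⟩ := hS
  refine ⟨hfin.sdiff.union (Set.finite_singleton _), ?_, ?_, ?_⟩
  · rintro x (⟨hx, -⟩ | rfl)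
    exacts [hstrict x hx, strictMono_coxeterInv (hstrict σ hσ)]
  · exact fun τ hτ => existsUnique_sameOrbit_replace hσ (sameOrbit_coxeterInv σ) (horb τ hτ)
  · rintro a (⟨ha, haσ⟩ | rfl) b (⟨hb, -⟩ | rfl) ρ hρ haρ hρb
    · exact mem_rightMutation_of_le hmin ha haσ haρ (hconv a ha b hb ρ hρ haρ hρb)
    · exact hS.mem_rightMutation_of_le_coxeterInv hmin ha haσ hρ haρ hρb
    · exact absurd (haρ.trans hρb) (hS.not_coxeterInv_le hσ hb)
    · exact Or.inr (le_antisymm hρb haρ)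

end IsSlice

end

theorem stmt_8_general (m n : ℕ) (S : Set (Para m n))
    (hS : IsSlice m n S) (σ : Para m n) (hσ : σ ∈ S)
    (hmin : ∀ τ ∈ S, τ ≤ σ → τ = σ) :
    IsSlice m n ((S \ {σ}) ∪ {coxeterInv m n σ}) ∧
    (∀ τ ∈ (S \ {σ}) ∪ {coxeterInv m n σ}, coxeterInv m n σ ≤ τ → τ = coxeterInv m n σ) := by
  refine ⟨hS.rightMutation_isSlice hσ hmin, ?_⟩
  rintro τ (⟨hτ, -⟩ | rfl) hle
  exacts [absurd hle (hS.not_coxeterInv_le hσ hτ), rfl]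

/-- Right mutation of a slice at a minimal element: if `σ ∈ S` is minimal, then
`(S \\ {σ}) ∪ {Φ⁻¹(σ)}` is again a slice, and `Φ⁻¹(σ)` is maximal in it. -/
theorem stmt_8 (m n : ℕ) (hm : 1 ≤ m) (hmn : m ≤ n) (S : Set (Para m n))
    (hS : IsSlice m n S) (σ : Para m n) (hσ : σ ∈ S)
    (hmin : ∀ τ ∈ S, τ ≤ σ → τ = σ) :
    IsSlice m n ((S \ {σ}) ∪ {coxeterInv m n σ}) ∧
    (∀ τ ∈ (S \ {σ}) ∪ {coxeterInv m n σ}, coxeterInv m n σ ≤ τ → τ = coxeterInv m n σ) :=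
  stmt_8_general m n S hS σ hσ hmin
end

section
/- Let n ≥ m ≥ 1, let S ⊂ Λ(m,n)^♯ be a slice, and let σ ∈ S be a minimal element. Then for every v ∈ {0,1}^{m+1} such that the map σ + v (defined by (σ+v)(i) = σ(i) + v_{i mod (m+1)} for i ∈ [m], extended equivariantly) is strictly monotone, one has σ + v ∈ S ∪ {Φ^{-1}(σ)}. In other words, all non-degenerate paracyclic simplices of the rectilinear cube σ + I^{m+1} are contained in S ∪ {Φ^{-1}(σ)}. -/
/-! Write `τ = σ + v`. Since `τ - σ` is `(m+1)`-periodic, `σ ≤ τ ≤ Φ⁻¹(σ)` everywhere.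
Let `ρ = Φ^k(τ)` be the representative of the orbit of `τ` in `S`. If `k ≤ 0` then
`σ ≤ τ ≤ ρ` and convexity puts `τ` in `S`; if `k ≥ 1` then `ρ ≤ Φ(τ) ≤ σ`, so `ρ = σ` by
minimality and `τ = Φ^{-k}(σ)`, which forces `k = 1`. -/

namespace Para

variable {m n : ℕ}

theorem sub_periodic (σ τ : Para m n) :
    Function.Periodic (fun i => τ.1 i - σ.1 i) ((m : ℤ) + 1) := fun i => by
  simp only [τ.2.2 i, σ.2.2 i]
  ring

theorem exists_fin_sub_eq (σ τ : Para m n) (i : ℤ) :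
    ∃ j : Fin (m + 1), τ.1 i - σ.1 i = τ.1 j - σ.1 j := by
  have hpos : (0 : ℤ) < (m : ℤ) + 1 := by positivity
  have hr0 := Int.emod_nonneg i hpos.ne'
  have hr := Int.emod_lt_of_pos i hpos
  refine ⟨⟨(i % ((m : ℤ) + 1)).toNat, by omega⟩, ?_⟩
  have hj : (((i % ((m : ℤ) + 1)).toNat : ℕ) : ℤ) = i - i / ((m : ℤ) + 1) * ((m : ℤ) + 1) := by
    rw [Int.toNat_of_nonneg hr0, Int.emod_def, mul_comm]
  simp only [hj]
  exact ((sub_periodic σ τ).sub_int_mul_eq _).symm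

end Para

theorem stmt_10_general (m n : ℕ) (S : Set (Para m n))
    (hS : IsSlice m n S) (σ : Para m n) (hσ : σ ∈ S)
    (hmin : ∀ τ ∈ S, τ ≤ σ → τ = σ) :
    ∀ (v : Fin (m + 1) → Fin 2) (τ : Para m n), StrictMono τ.1 →
      (∀ i : Fin (m + 1), τ.1 (i : ℕ) = σ.1 (i : ℕ) + ((v i : ℕ) : ℤ)) →
      τ ∈ S ∪ {coxeterInv m n σ} := by
  intro v τ hτ hτv
  obtain ⟨-, -, hrep, hconv⟩ := hS
  have hστ : ∀ i, 0 ≤ τ.1 i - σ.1 i ∧ τ.1 i - σ.1 i ≤ 1 := fun i => by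
    obtain ⟨j, hj⟩ := σ.exists_fin_sub_eq τ i
    have := hτv j
    have := (v j).isLt
    omega
  obtain ⟨ρ, ⟨hρS, k, hk⟩, -⟩ := hrep τ hτ
  rcases le_or_gt k 0 with hk_nonpos | hk_pos
  · exact Or.inl (hconv σ hσ ρ hρS τ hτ (fun i => by linarith [hστ i])
      (fun i => by linarith [hk i]))
  · obtain rfl : ρ = σ := hmin ρ hρS fun i => by linarith [hστ i, hk i]
    have hk_eq : k = 1 := by linarith [hστ 0, hk 0]
    exact Or.inr (Subtype.ext (funext fun i => by
      show τ.1 i = ρ.1 i + 1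
      linarith [hk i]))

/-- If `σ` is a minimal element of a slice `S`, then every non-degenerate (strictly
monotone) paracyclic simplex of the rectilinear cube `σ + I^{m+1}`, i.e. every
strictly monotone `τ ∈ Λ(m,n)` with `τ(i) = σ(i) + v(i)` on `[m]` for some
`v ∈ {0,1}^{m+1}`, lies in `S ∪ {Φ⁻¹(σ)}`. -/
theorem stmt_10 (m n : ℕ) (hm : 1 ≤ m) (hmn : m ≤ n) (S : Set (Para m n))
    (hS : IsSlice m n S) (σ : Para m n) (hσ : σ ∈ S)
    (hmin : ∀ τ ∈ S, τ ≤ σ → τ = σ) :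
    ∀ (v : Fin (m + 1) → Fin 2) (τ : Para m n), StrictMono τ.1 →
      (∀ i : Fin (m + 1), τ.1 (i : ℕ) = σ.1 (i : ℕ) + ((v i : ℕ) : ℤ)) →
      τ ∈ S ∪ {coxeterInv m n σ} :=
  stmt_10_general m n S hS σ hσ hmin
end

section
/- A subset S ⊂ Λ(1,n)^♯ (with n ≥ 1), identified with a collection of two-element subsets {σ(0) mod shifting} that happen to lie in {0,...,n}, is a slice if and only if either n = 1 and S = {(0,1)}, or n ≥ 2 and S = S' ∪ {(0,n)} where S' is (the image under the evident inclusion of) a slice in Λ(1,n-1)^♯ supported either on {0,...,n-1} or on {1,...,n}. -/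
/-!
The top edge `(lo, hi)` is the only edge of length `hi - lo`, so it lies in every slice on
`{lo, …, hi}`. The edge of length `hi - lo - 1` is `(lo, hi - 1)` or `(lo + 1, hi)`. In the first
case no other edge ends at `hi`: convexity would put `(lo + 1, hi)` into the slice, a second edge
of length `hi - lo - 1`. So removing the top edge leaves a slice on `{lo, …, hi - 1}`; the second
case is the mirror image under `(a, b) ↦ (lo + hi - b, lo + hi - a)`. Conversely, adding the top
edge to a slice on `{lo, …, hi - 1}` keeps it convex, since an edge `(lo, b)` lies below the
slice's edge of length `b - lo`; the other subwindow is again the mirror image.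
-/

/-- A (normalized) slice on the vertex window `{lo, …, hi}`: a set of edges `(a,b)`
with `lo ≤ a < b ≤ hi` containing exactly one edge of each length `d ∈ {1, …, hi-lo}`
and convex for the componentwise order. -/
def IsEdgeSlice (lo hi : ℤ) (S : Set (ℤ × ℤ)) : Prop :=
  (∀ p ∈ S, lo ≤ p.1 ∧ p.1 < p.2 ∧ p.2 ≤ hi) ∧
  (∀ d : ℤ, 1 ≤ d → d ≤ hi - lo → ∃! p : ℤ × ℤ, p ∈ S ∧ p.2 - p.1 = d) ∧
  (∀ p ∈ S, ∀ q ∈ S, ∀ r : ℤ × ℤ, r.1 < r.2 →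
    p.1 ≤ r.1 → p.2 ≤ r.2 → r.1 ≤ q.1 → r.2 ≤ q.2 → r ∈ S)

def reflectEdge (c : ℤ) (p : ℤ × ℤ) : ℤ × ℤ := (c - p.2, c - p.1)

@[simp]
lemma reflectEdge_reflectEdge (c : ℤ) (p : ℤ × ℤ) : reflectEdge c (reflectEdge c p) = p := by
  simp [reflectEdge]

lemma isEdgeSlice_empty (lo : ℤ) : IsEdgeSlice lo lo ∅ :=
  ⟨by simp, fun d hd1 hd2 => by omega, by simp⟩

namespace IsEdgeSlice

variable {lo hi : ℤ} {S : Set (ℤ × ℤ)}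

lemma eq_of_sub_eq (h : IsEdgeSlice lo hi S) {p q : ℤ × ℤ} (hp : p ∈ S) (hq : q ∈ S)
    (hpq : p.2 - p.1 = q.2 - q.1) : p = q := by
  obtain ⟨_, _, _⟩ := h.1 p hp
  obtain ⟨_, _, _⟩ := h.1 q hq
  exact (h.2.1 _ (by omega) (by omega)).unique ⟨hp, rfl⟩ ⟨hq, hpq.symm⟩

lemma top_mem (h : IsEdgeSlice lo hi S) (hlt : lo < hi) : (lo, hi) ∈ S := by
  obtain ⟨p, ⟨hp, hpd⟩, -⟩ := h.2.1 (hi - lo) (by omega) le_rfl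
  obtain ⟨_, _, _⟩ := h.1 p hp
  obtain rfl : p = (lo, hi) := Prod.ext (by omega) (by omega)
  exact hp

lemma eq_singleton_top (h : IsEdgeSlice lo hi S) (hlt : lo < hi) (hle : hi ≤ lo + 1) :
    S = {(lo, hi)} :=
  Set.eq_singleton_iff_unique_mem.2 ⟨h.top_mem hlt, fun p hp => by
    obtain ⟨_, _, _⟩ := h.1 p hp
    exact Prod.ext (by omega) (by omega)⟩

lemma preimage_reflectEdge (h : IsEdgeSlice lo hi S) (c : ℤ) :
    IsEdgeSlice (c - hi) (c - lo) (reflectEdge c ⁻¹' S) := by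
  obtain ⟨hb, hu, hc⟩ := h
  refine ⟨fun p hp => ?_, fun d hd1 hd2 => ?_, fun p hp q hq r hr h1 h2 h3 h4 => ?_⟩
  · obtain ⟨_, _, _⟩ := hb _ hp
    simp only [reflectEdge] at *
    omega
  · obtain ⟨p, ⟨hp, hpd⟩, hpu⟩ := hu d hd1 (by omega)
    refine ⟨reflectEdge c p, ⟨by simpa using hp, by simp only [reflectEdge]; omega⟩, ?_⟩
    rintro q ⟨hq, hqd⟩
    rw [← hpu _ ⟨hq, by simp only [reflectEdge] at hqd ⊢; omega⟩, reflectEdge_reflectEdge]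
  · refine hc _ hq _ hp _ ?_ ?_ ?_ ?_ ?_ <;> simp only [reflectEdge] at * <;> omega

lemma insert_top_left (h : IsEdgeSlice lo (hi - 1) S) (hlt : lo < hi) :
    IsEdgeSlice lo hi (insert (lo, hi) S) := by
  obtain ⟨hb, hu, hc⟩ := h
  refine ⟨?_, fun d hd1 hd2 => ?_, ?_⟩
  · rintro p (rfl | hp)
    · exact ⟨le_rfl, hlt, le_rfl⟩
    · obtain ⟨_, _, _⟩ := hb p hp
      exact ⟨by omega, by omega, by omega⟩
  · obtain rfl | hd := hd2.eq_or_lt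
    · refine ⟨(lo, hi), ⟨.inl rfl, rfl⟩, ?_⟩
      rintro q ⟨rfl | hq, hqd⟩
      · simp
      · obtain ⟨_, _, _⟩ := hb q hq
        omega
    · obtain ⟨p, ⟨hp, hpd⟩, hpu⟩ := hu d hd1 (by omega)
      refine ⟨p, ⟨.inr hp, hpd⟩, ?_⟩
      rintro q ⟨rfl | hq, hqd⟩
      · simp only at hqd; omega
      · exact hpu q ⟨hq, hqd⟩
  · rintro p (rfl | hp) q (rfl | hq) r hr h1 h2 h3 h4
    · exact .inl (Prod.ext (le_antisymm h3 h1) (le_antisymm h4 h2))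
    · obtain ⟨_, _, _⟩ := hb q hq
      simp only at h2
      omega
    · obtain ⟨_, _, _⟩ := hb p hp
      simp only at h3 h4
      obtain h4 | h4 := h4.eq_or_lt
      · exact .inl (Prod.ext (by omega) h4)
      obtain ⟨q', ⟨hq', hq'd⟩, -⟩ := hu (r.2 - lo) (by omega) (by omega)
      obtain ⟨_, _, _⟩ := hb q' hq'
      exact .inr (hc p hp q' hq' r hr h1 h2 (by omega) (by omega))
    · exact .inr (hc p hp q hq r hr h1 h2 h3 h4)

lemma diff_top_left (h : IsEdgeSlice lo hi S) (he : (lo, hi - 1) ∈ S) :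
    IsEdgeSlice lo (hi - 1) (S \ {(lo, hi)}) := by
  have ⟨hb, hu, hc⟩ := h
  obtain ⟨_, _, _⟩ := hb _ he
  have hbound : ∀ p ∈ S \ {(lo, hi)}, lo ≤ p.1 ∧ p.1 < p.2 ∧ p.2 ≤ hi - 1 := by
    rintro p ⟨hp, hne⟩
    obtain ⟨_, _, _⟩ := hb p hp
    refine ⟨by omega, by omega, ?_⟩
    by_contra! hp2
    have hp1 : lo < p.1 := by
      by_contra! hp1
      exact hne (Prod.ext (by omega) (by omega))
    have hmid : (lo + 1, hi) ∈ S := hc _ he p hp _ (by simp only at *; omega)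
      (by simp) (by simp) (by simp only; omega) (by simp only; omega)
    have := h.eq_of_sub_eq he hmid (by simp only; ring)
    simp at this
  refine ⟨hbound, fun d hd1 hd2 => ?_, fun p hp q hq r hr h1 h2 h3 h4 => ?_⟩
  · obtain ⟨p, ⟨hp, hpd⟩, hpu⟩ := hu d hd1 (by omega)
    refine ⟨p, ⟨⟨hp, ?_⟩, hpd⟩, fun q ⟨hq, hqd⟩ => hpu q ⟨hq.1, hqd⟩⟩
    rintro rfl
    simp only at hpd
    omega
  · obtain ⟨_, _, _⟩ := hbound q hq
    exact ⟨hc p hp.1 q hq.1 r hr h1 h2 h3 h4, by rintro rfl; simp only at h4; omega⟩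

lemma insert_top_right (h : IsEdgeSlice (lo + 1) hi S) (hlt : lo < hi) :
    IsEdgeSlice lo hi (insert (lo, hi) S) := by
  have h' : IsEdgeSlice lo (hi - 1) (reflectEdge (lo + hi) ⁻¹' S) := by
    convert h.preimage_reflectEdge (lo + hi) using 1 <;> ring
  convert (h'.insert_top_left hlt).preimage_reflectEdge (lo + hi) using 1
  · ring
  · ring
  · ext ⟨a, b⟩
    simp only [Set.mem_insert_iff, Prod.ext_iff, Set.mem_preimage, reflectEdge, sub_sub_cancel]
    exact or_congr_left (by omega)

lemma diff_top (h : IsEdgeSlice lo hi S) (hlt : lo + 1 < hi) :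
    IsEdgeSlice lo (hi - 1) (S \ {(lo, hi)}) ∨ IsEdgeSlice (lo + 1) hi (S \ {(lo, hi)}) := by
  obtain ⟨e, ⟨he, hed⟩, -⟩ := h.2.1 (hi - lo - 1) (by omega) (by omega)
  obtain ⟨_, _, _⟩ := h.1 e he
  obtain he1 | he1 : e.1 = lo ∨ e.1 = lo + 1 := by omega
  · left
    obtain rfl : e = (lo, hi - 1) := Prod.ext he1 (by omega)
    exact h.diff_top_left he
  · right
    have h' : IsEdgeSlice lo hi (reflectEdge (lo + hi) ⁻¹' S) := by
      convert h.preimage_reflectEdge (lo + hi) using 1 <;> ring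
    have he' : (lo, hi - 1) ∈ reflectEdge (lo + hi) ⁻¹' S := by
      obtain rfl : e = (lo + 1, hi) := Prod.ext he1 (by omega)
      show reflectEdge (lo + hi) (lo, hi - 1) ∈ S
      convert he using 1
      ext <;> simp only [reflectEdge] <;> ring
    convert (h'.diff_top_left he').preimage_reflectEdge (lo + hi) using 1
    · ring
    · ring
    · ext ⟨a, b⟩
      simp only [Set.mem_sdiff, Set.mem_singleton_iff, Prod.ext_iff, not_and, Set.preimage_sdiff,
        Set.mem_preimage, reflectEdge, sub_sub_cancel, and_congr_right_iff]
      exact fun _ => by omega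

end IsEdgeSlice

lemma isEdgeSlice_singleton (lo : ℤ) : IsEdgeSlice lo (lo + 1) {(lo, lo + 1)} := by
  have h : IsEdgeSlice lo (lo + 1 - 1) ∅ := by simpa using isEdgeSlice_empty lo
  simpa using h.insert_top_left (by omega)

/-- Recursive characterization of slices in `Λ(1,n)^♯` (normalized to edges of the
`n`-simplex): `S` is a slice iff either `n = 1` and `S = {(0,1)}`, or `n ≥ 2` and
`S = S' ∪ {(0,n)}` for a slice `S'` supported on `{0, …, n-1}` or on `{1, …, n}`. -/
theorem stmt_12 (n : ℕ) (hn : 1 ≤ n) (S : Set (ℤ × ℤ)) :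
    IsEdgeSlice 0 n S ↔
      ((n = 1 ∧ S = {((0 : ℤ), (1 : ℤ))}) ∨
       (2 ≤ n ∧ ∃ S' : Set (ℤ × ℤ), S = insert ((0 : ℤ), (n : ℤ)) S' ∧
          (IsEdgeSlice 0 ((n : ℤ) - 1) S' ∨ IsEdgeSlice 1 (n : ℤ) S'))) := by
  constructor
  · intro h
    obtain rfl | hn := hn.eq_or_lt
    · exact .inl ⟨rfl, by simpa using h.eq_singleton_top (by simp) (by simp)⟩
    · have htop := h.top_mem (by omega)
      exact .inr ⟨hn, S \ {((0 : ℤ), (n : ℤ))}, (Set.insert_sdiff_self_of_mem htop).symm,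
        by simpa using h.diff_top (by omega)⟩
  · rintro (⟨rfl, rfl⟩ | ⟨-, S', rfl, hS' | hS'⟩)
    · simpa using isEdgeSlice_singleton 0
    · exact hS'.insert_top_left (by omega)
    · exact hS'.insert_top_right (by omega)
end

section
/- Let n ≥ m ≥ 1. The image S_P of the embedding Δ(m-1,n-1) → Λ(m,n) given by σ ↦ (the equivariant extension of) [0]*σ, restricted to strictly monotone simplices, is a slice: S_P = { τ ∈ Λ(m,n)^♯ : τ(0) = 0 } ∩ { τ : τ(m) ≤ n }, it is convex in Λ(m,n)^♯, and it contains exactly one element of each Φ-orbit of Λ(m,n)^♯. -/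
/-!
Both the difference of two paracyclic simplices and the increment `τ(i+1) - τ(i)` are
`(m+1)`-periodic, so a simplex is determined by, and is strictly monotone as soon as it increases
on, the window `[0, m]`. Strict monotonicity gives `τ(m) < τ(m+1) = τ(0) + n + 1`, so the bound
`τ(m) ≤ n` is automatic once `τ(0) = 0`. Hence the orbit of `τ` meets `S_P` exactly in
`Φ^{τ(0)}(τ)`, convexity reduces to squeezing `ρ(0)` between two zeros, and finiteness holds
because on the window the elements of `S_P` take values in `[0, n]`.
-/

theorem exists_strictMono_fin_iff {m n : ℕ} (f : Fin m → ℤ) :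
    (∃ σ : Fin m → Fin n, StrictMono σ ∧ ∀ i, f i = ((σ i : ℕ) : ℤ) + 1) ↔
      StrictMono f ∧ ∀ i, 1 ≤ f i ∧ f i ≤ n := by
  constructor
  · rintro ⟨σ, hσ, hf⟩
    refine ⟨fun i j hij => ?_, fun i => ?_⟩
    · have := Fin.lt_def.mp (hσ hij)
      rw [hf, hf]; omega
    · have := (σ i).isLt
      rw [hf]; omega
  · rintro ⟨hf, hbound⟩
    refine ⟨fun i => ⟨(f i - 1).toNat, by have := hbound i; omega⟩, fun i j hij => ?_,
      fun i => ?_⟩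
    · have := hf hij
      have := hbound i
      simp only [Fin.mk_lt_mk]; omega
    · have := hbound i
      simp only; omega

namespace Para

variable {m n : ℕ}

theorem periodic_sub (τ τ' : Para m n) : Function.Periodic (τ.1 - τ'.1) ((m : ℤ) + 1) :=
  fun i => by simp only [Pi.sub_apply, τ.2.2, τ'.2.2]; ring

theorem periodic_succ_sub (τ : Para m n) :
    Function.Periodic (fun i => τ.1 (i + 1) - τ.1 i) ((m : ℤ) + 1) :=
  fun i => by simp only [add_right_comm i, τ.2.2]; ring

theorem ext_of_eqOn {τ τ' : Para m n} (h : Set.EqOn τ.1 τ'.1 (Set.Ico 0 ((m : ℤ) + 1))) :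
    τ = τ' := by
  refine Subtype.ext (funext fun i => ?_)
  obtain ⟨r, hr, hi⟩ := (periodic_sub τ τ').exists_mem_Ico₀ (by positivity) i
  have hi : τ.1 i - τ'.1 i = τ.1 r - τ'.1 r := hi
  have := h hr
  omega

theorem strictMono_of_lt_succ {τ : Para m n}
    (h : ∀ r ∈ Set.Ico 0 ((m : ℤ) + 1), τ.1 r < τ.1 (r + 1)) : StrictMono τ.1 := by
  refine strictMono_int_of_lt_succ fun i => ?_
  obtain ⟨r, hr, hi⟩ := (periodic_succ_sub τ).exists_mem_Ico₀ (by positivity) i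
  have hi : τ.1 (i + 1) - τ.1 i = τ.1 (r + 1) - τ.1 r := hi
  have := h r hr
  omega

theorem apply_succ_last (τ : Para m n) : τ.1 ((m : ℤ) + 1) = τ.1 0 + (n + 1) := by
  simpa using τ.2.2 0

theorem apply_last_le_of_strictMono {τ : Para m n} (hτ : StrictMono τ.1) :
    τ.1 m ≤ τ.1 0 + n := by
  have := hτ (lt_add_one (m : ℤ))
  rw [apply_succ_last] at this
  omega

/-- `Φ^k(τ)`, for every integer `k`. -/
def sub (τ : Para m n) (k : ℤ) : Para m n :=
  ⟨fun i => τ.1 i - k,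
    fun a b hab => by have := τ.2.1 hab; simp only; omega,
    fun i => by simp only [τ.2.2]; ring⟩

theorem sameOrbit_sub (τ : Para m n) (k : ℤ) : sameOrbit m n τ (τ.sub k) :=
  ⟨k, fun _ => rfl⟩

end Para

def projSlice (m n : ℕ) : Set (Para m n) :=
  {τ | StrictMono τ.1 ∧ τ.1 0 = 0 ∧ τ.1 (m : ℕ) ≤ n}

section projSlice

variable {m n : ℕ}

theorem mem_projSlice_iff {τ : Para m n} :
    τ ∈ projSlice m n ↔ StrictMono τ.1 ∧ τ.1 0 = 0 :=
  ⟨fun h => ⟨h.1, h.2.1⟩, fun ⟨hτ, h0⟩ =>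
    ⟨hτ, h0, by have := Para.apply_last_le_of_strictMono hτ; omega⟩⟩

theorem mem_projSlice_iff_tail {τ : Para m n} :
    τ ∈ projSlice m n ↔ τ.1 0 = 0 ∧ StrictMono (fun i : Fin m => τ.1 ((i : ℕ) + 1)) ∧
      ∀ i : Fin m, 1 ≤ τ.1 ((i : ℕ) + 1) ∧ τ.1 ((i : ℕ) + 1) ≤ n := by
  constructor
  · rintro ⟨hτ, h0, hlast⟩
    refine ⟨h0, fun i j hij => hτ (by simpa using hij), fun i => ⟨?_, ?_⟩⟩
    · have := hτ (by omega : (0 : ℤ) < (i : ℕ) + 1)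
      omega
    · have := hτ.monotone (by omega : ((i : ℕ) : ℤ) + 1 ≤ m)
      omega
  · rintro ⟨h0, htail, hbound⟩
    have hindex (r : ℤ) (h1 : 1 ≤ r) (h2 : r ≤ m) : ∃ i : Fin m, ((i : ℕ) : ℤ) + 1 = r :=
      ⟨⟨(r - 1).toNat, by omega⟩, by simp only; omega⟩
    have hend := τ.apply_succ_last
    refine mem_projSlice_iff.mpr ⟨Para.strictMono_of_lt_succ fun r ⟨hr0, hrm⟩ => ?_, h0⟩
    obtain rfl | hr0 := hr0.eq_or_lt
    · rw [zero_add]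
      obtain rfl | hm := (Nat.zero_le m).eq_or_lt
      · simp only [Nat.cast_zero, zero_add] at hend
        omega
      · obtain ⟨i, hi⟩ := hindex 1 le_rfl (by omega)
        have := (hbound i).1
        rw [hi] at this
        omega
    obtain ⟨i, rfl⟩ := hindex r hr0 (by omega)
    obtain hlast | hlt := (Int.lt_add_one_iff.mp hrm).eq_or_lt
    · have := (hbound i).2
      rw [hlast] at this ⊢
      rw [hend, h0]
      omega
    · obtain ⟨j, hj⟩ := hindex (i + 1 + 1) (by omega) (by omega)
      rw [← hj]
      exact htail (Fin.lt_def.mpr (by omega))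

theorem apply_mem_Icc_of_mem_projSlice {τ : Para m n} (hτ : τ ∈ projSlice m n) {r : ℤ}
    (hr : r ∈ Set.Ico 0 ((m : ℤ) + 1)) : τ.1 r ∈ Set.Icc 0 (n : ℤ) := by
  obtain ⟨hmono, h0, hlast⟩ := hτ
  have := hmono.monotone hr.1
  have := hmono.monotone (Int.lt_add_one_iff.mp hr.2)
  constructor <;> omega

theorem projSlice_finite : (projSlice m n).Finite := by
  let restrict (τ : Para m n) : Fin (m + 1) → ℤ := fun r => τ.1 r
  refine .of_finite_image (f := restrict)
    ((Set.Finite.pi fun _ => Set.finite_Icc 0 (n : ℤ)).subset ?_)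
    fun τ _ τ' _ h => Para.ext_of_eqOn fun r hr => ?_
  · rintro _ ⟨τ, hτ, rfl⟩ r -
    exact apply_mem_Icc_of_mem_projSlice hτ ⟨by omega, by have := r.isLt; omega⟩
  · have := congrFun h ⟨r.toNat, by obtain ⟨_, _⟩ := hr; omega⟩
    simpa [restrict, Int.toNat_of_nonneg hr.1] using this

theorem existsUnique_sameOrbit_mem_projSlice {τ : Para m n} (hτ : StrictMono τ.1) :
    ∃! ρ : Para m n, ρ ∈ projSlice m n ∧ sameOrbit m n τ ρ := by
  refine ⟨τ.sub (τ.1 0), ⟨mem_projSlice_iff.mpr ⟨fun a b hab => ?_, sub_self _⟩,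
    τ.sameOrbit_sub _⟩, fun ρ ⟨hρ, k, hk⟩ => Subtype.ext (funext fun i => ?_)⟩
  · exact sub_lt_sub_right (hτ hab) _
  · have := hk 0
    have := hk i
    have := hρ.2.1
    simp only [Para.sub]
    omega

theorem mem_projSlice_of_le_of_le {σ τ ρ : Para m n} (hσ : σ ∈ projSlice m n)
    (hτ : τ ∈ projSlice m n) (hρ : StrictMono ρ.1) (hσρ : σ ≤ ρ) (hρτ : ρ ≤ τ) :
    ρ ∈ projSlice m n := by
  have h1 : σ.1 0 ≤ ρ.1 0 := hσρ 0
  have h2 : ρ.1 0 ≤ τ.1 0 := hρτ 0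
  have := hσ.2.1
  have := hτ.2.1
  exact mem_projSlice_iff.mpr ⟨hρ, by omega⟩

theorem isSlice_projSlice : IsSlice m n (projSlice m n) :=
  ⟨projSlice_finite, fun _ hσ => hσ.1, fun _ => existsUnique_sameOrbit_mem_projSlice,
    fun _ hσ _ hτ _ hρ => mem_projSlice_of_le_of_le hσ hτ hρ⟩

end projSlice

theorem stmt_13_general (m n : ℕ) :
    (∀ τ : Para m n,
      (StrictMono τ.1 ∧ τ.1 0 = 0 ∧ τ.1 (m : ℕ) ≤ n) ↔
      (∃ σ : Fin m → Fin n, StrictMono σ ∧ τ.1 0 = 0 ∧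
        ∀ i : Fin m, τ.1 ((i : ℕ) + 1) = ((σ i : ℕ) : ℤ) + 1)) ∧
    IsSlice m n {τ : Para m n | StrictMono τ.1 ∧ τ.1 0 = 0 ∧ τ.1 (m : ℕ) ≤ n} := by
  refine ⟨fun τ => ?_, isSlice_projSlice⟩
  change τ ∈ projSlice m n ↔ _
  rw [mem_projSlice_iff_tail, ← exists_strictMono_fin_iff]
  simp only [exists_and_left, and_comm (a := StrictMono _), and_assoc]

/-- The projective slice `S_P ⊂ Λ(m,n)^♯`, the image of the embedding
`Δ(m-1,n-1)^♯ → Λ(m,n)^♯`, `σ ↦ [0]*σ`, equals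
`{τ ∈ Λ(m,n)^♯ : τ(0) = 0 and τ(m) ≤ n}` and is a slice. -/
theorem stmt_13 (m n : ℕ) (hm : 1 ≤ m) (hmn : m ≤ n) :
    (∀ τ : Para m n,
      (StrictMono τ.1 ∧ τ.1 0 = 0 ∧ τ.1 (m : ℕ) ≤ n) ↔
      (∃ σ : Fin m → Fin n, StrictMono σ ∧ τ.1 0 = 0 ∧
        ∀ i : Fin m, τ.1 ((i : ℕ) + 1) = ((σ i : ℕ) : ℤ) + 1)) ∧
    IsSlice m n {τ : Para m n | StrictMono τ.1 ∧ τ.1 0 = 0 ∧ τ.1 (m : ℕ) ≤ n} :=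
  stmt_13_general m n
end

section
/- Let X be a simplicial abelian group and n ≥ 1. Define the 0-th horn group X_{Λ_0^n} as the group of tuples (x_1, ..., x_n) ∈ (X_{n-1})^n satisfying d_i x_j = d_{j-1} x_i for all 1 ≤ i < j ≤ n, and let p : X_n → X_{Λ_0^n} be the map x ↦ (d_1 x, ..., d_n x). Then p is a split surjection of abelian groups with kernel ⋂_{i=1}^n ker(d_i : X_n → X_{n-1}); in particular there is a group isomorphism X_n ≅ (⋂_{i=1}^n ker d_i) ⊕ X_{Λ_0^n}. -/
open CategoryTheory Opposite

/-- The compatibility ("matching") conditions cutting out the `0`-th horn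
`X_{Λ₀^{n+1}}` inside `(X_n)^{n+1}`: a tuple `(x_1, …, x_{n+1})` (indexed here by
`Fin (n+1)`) is a horn iff `d_i x_j = d_{j-1} x_i` for all `1 ≤ i < j ≤ n+1`.
(For `n = 0` there are no conditions.) -/
def hornCond0 (X : SimplicialObject AddCommGrpCat) :
    (n : ℕ) → (Fin (n + 1) → X.obj (op (SimplexCategory.mk n))) → Prop
  | 0, _ => True
  | k + 1, x => ∀ i j : Fin (k + 1), i ≤ j →
      X.δ i.succ (x j.succ) = X.δ j.succ (x i.castSucc)

open Simplicial

/-- The `0`-th horn group `X_{Λ₀^{n+1}}` of a simplicial abelian group. -/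
def hornGroup0 (X : SimplicialObject AddCommGrpCat) (n : ℕ) :
    AddSubgroup (Fin (n + 1) → X.obj (op ⦋n⦌)) where
  carrier := {x | hornCond0 X n x}
  zero_mem' := by
    cases n with
    | zero => exact trivial
    | succ k =>
      simp only [Set.mem_setOf_eq, hornCond0]
      intro i j h
      simp
  add_mem' := by
    cases n with
    | zero => intros; exact trivial
    | succ k =>
      intro a b ha hb
      simp only [Set.mem_setOf_eq, hornCond0] at *
      intro i j h
      simp only [Pi.add_apply, map_add, ha i j h, hb i j h]
  neg_mem' := by
    cases n with
    | zero => intros; exact trivial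
    | succ k =>
      intro a ha
      simp only [Set.mem_setOf_eq, hornCond0] at *
      intro i j h
      simp only [Pi.neg_apply, map_neg, ha i j h]

/-- The Segal map `X_{n+1} → (X_n)^{n+1}`, `x ↦ (d_1 x, …, d_{n+1} x)`. -/
def segalMap0 (X : SimplicialObject AddCommGrpCat) (n : ℕ) :
    X.obj (op ⦋n + 1⦌) →+ (Fin (n + 1) → X.obj (op ⦋n⦌)) where
  toFun y := fun i => X.δ i.succ y
  map_zero' := by funext i; simp
  map_add' a b := by funext i; simp

/-- The `(n+1)`-st term `⋂_{i=1}^{n+1} ker dᵢ` of the normalized Moore complex. -/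
def mooreGroup0 (X : SimplicialObject AddCommGrpCat) (n : ℕ) :
    AddSubgroup (X.obj (op ⦋n + 1⦌)) where
  carrier := {y | ∀ i : Fin (n + 1), X.δ i.succ y = 0}
  zero_mem' := by intro i; simp
  add_mem' := by intro a b ha hb i; simp [ha i, hb i]
  neg_mem' := by intro a ha i; simp [ha i]

/-
The recursion `f⁽ⁱ⁾ = f⁽ⁱ⁺¹⁾ + s_{i-1} (pᵢ - dᵢ f⁽ⁱ⁺¹⁾)` corrects the `i`-th face of its input
to `pᵢ` (by `dᵢ s_{i-1} = id`) without disturbing the faces `dⱼ`, `j > i`, already corrected: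
there `dⱼ s_{i-1} = s_{i-1} d_{j-1}`, and `d_{j-1} pᵢ = dᵢ pⱼ = dᵢ dⱼ f⁽ⁱ⁺¹⁾ = d_{j-1} dᵢ f⁽ⁱ⁺¹⁾`
by the horn condition and the simplicial identities. Hence `f⁽¹⁾` is a section of `p`, and a split
surjection of abelian groups identifies its source with the product of its kernel and target.
-/

def AddMonoidHom.kerProdEquivOfRightInverse {A B : Type*} [AddCommGroup A] [AddCommGroup B]
    (p : A →+ B) (s : B →+ A) (hs : Function.RightInverse s p) : A ≃+ p.ker × B where
  toFun a := (⟨a - s (p a), by simp [hs (p a)]⟩, p a)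
  invFun c := c.1 + s c.2
  left_inv a := by simp
  right_inv c := by
    have hc : p c.1 = 0 := c.1.2
    ext <;> simp [hs c.2, hc]
  map_add' a b := by
    refine Prod.ext (Subtype.ext ?_) (map_add p a b)
    simp only [Prod.fst_add, AddSubgroup.coe_add, map_add]
    abel

namespace CategoryTheory.SimplicialObject

variable {C : Type*} [Category C] {FC : C → C → Type*} {CC : C → Type*}
  [∀ X Y, FunLike (FC X Y) (CC X) (CC Y)] [ConcreteCategory C FC] {X : SimplicialObject C}

lemma δ_comp_δ_apply {n : ℕ} {i j : Fin (n + 2)} (H : i ≤ j) (y : ToType (X _⦋n + 2⦌)) :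
    X.δ i (X.δ j.succ y) = X.δ j (X.δ i.castSucc y) := by
  simpa using ConcreteCategory.congr_hom (X.δ_comp_δ H) y

lemma δ_comp_σ_succ_apply {n : ℕ} (i : Fin (n + 1)) (y : ToType (X _⦋n⦌)) : X.δ i.succ (X.σ i y) = y := by
  simpa using ConcreteCategory.congr_hom X.δ_comp_σ_succ y

lemma δ_comp_σ_of_gt_apply {n : ℕ} {i : Fin (n + 2)} {j : Fin (n + 1)} (H : j.castSucc < i)
    (y : ToType (X _⦋n + 1⦌)) : X.δ i.succ (X.σ j.castSucc y) = X.σ j (X.δ i y) := by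
  simpa using ConcreteCategory.congr_hom (X.δ_comp_σ_of_gt H) y

end CategoryTheory.SimplicialObject

open CategoryTheory.SimplicialObject

section Horn

variable (X : SimplicialObject AddCommGrpCat)

lemma segalMap0_mem_hornGroup0 (n : ℕ) (y : X _⦋n + 1⦌) : segalMap0 X n y ∈ hornGroup0 X n := by
  cases n with
  | zero => trivial
  | succ N =>
    intro i j hij
    change X.δ i.succ (X.δ j.succ.succ y) = X.δ j.succ (X.δ i.castSucc.succ y)
    rw [δ_comp_δ_apply (Fin.succ_le_succ_iff.mpr hij), Fin.succ_castSucc]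

lemma segalMap0_eq_zero_iff (n : ℕ) (y : X _⦋n + 1⦌) :
    segalMap0 X n y = 0 ↔ y ∈ mooreGroup0 X n :=
  funext_iff

variable {X}

lemma δ_succ_eq_δ_of_mem_hornGroup0 {N : ℕ} {x : Fin (N + 2) → X _⦋N + 1⦌}
    (hx : x ∈ hornGroup0 X (N + 1)) {i : Fin (N + 1)} {j : Fin (N + 2)} (hij : i.castSucc < j) :
    X.δ i.succ (x j) = X.δ j (x i.castSucc) := by
  obtain ⟨j, rfl⟩ := Fin.exists_succ_eq.mpr (Fin.ne_zero_of_lt hij)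
  exact hx i j (Fin.castSucc_lt_succ_iff.mp hij)

end Horn

section Filler

variable (X : SimplicialObject AddCommGrpCat) (n : ℕ)

/-- With faces indexed from `0` (so `m = i - 1`), `hornFillerAux X n (k + 1)` is the paper's
`f⁽ⁿ⁺¹⁻ᵏ⁾`; in particular `hornFillerAux X n (n + 1) = f⁽¹⁾`. -/
def hornFillerAux : ℕ → ((Fin (n + 1) → X _⦋n⦌) →+ X _⦋n + 1⦌) := fun k => match k with
  | 0 => 0
  | k + 1 =>
    let m : Fin (n + 1) := ⟨n - k, by omega⟩
    hornFillerAux k +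
      (X.σ m).hom.comp (Pi.evalAddMonoidHom _ m - (X.δ m.succ).hom.comp (hornFillerAux k))

def hornFiller : hornGroup0 X n →+ X _⦋n + 1⦌ :=
  (hornFillerAux X n (n + 1)).comp (hornGroup0 X n).subtype

def hornMap0 : X _⦋n + 1⦌ →+ hornGroup0 X n :=
  (segalMap0 X n).codRestrict _ (segalMap0_mem_hornGroup0 X n)

variable {X n}

lemma δ_succ_add_σ_sub_δ_succ (m : Fin (n + 1)) (a : X _⦋n⦌) (y : X _⦋n + 1⦌) :
    X.δ m.succ (y + X.σ m (a - X.δ m.succ y)) = a := by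
  rw [map_add, δ_comp_σ_succ_apply]
  abel

lemma δ_succ_σ_sub_δ_succ_eq_zero {N : ℕ} {x : Fin (N + 2) → X _⦋N + 1⦌}
    (hx : x ∈ hornGroup0 X (N + 1)) {m j : Fin (N + 2)} (hmj : m < j) {y : X _⦋N + 2⦌}
    (hy : X.δ j.succ y = x j) : X.δ j.succ (X.σ m (x m - X.δ m.succ y)) = 0 := by
  obtain ⟨m, rfl⟩ : ∃ m' : Fin (N + 1), m'.castSucc = m :=
    ⟨m.castPred (Fin.ne_last_of_lt hmj), Fin.castSucc_castPred _ _⟩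
  have hδ : X.δ j (X.δ m.castSucc.succ y) = X.δ j (x m.castSucc) := by
    rw [Fin.succ_castSucc, ← δ_comp_δ_apply (Fin.castSucc_lt_iff_succ_le.mp hmj), hy,
      δ_succ_eq_δ_of_mem_hornGroup0 hx hmj]
  rw [δ_comp_σ_of_gt_apply hmj, map_sub, hδ, sub_self, map_zero]

lemma δ_succ_hornFillerAux {x : Fin (n + 1) → X _⦋n⦌} (hx : x ∈ hornGroup0 X n) {k : ℕ}
    (hk : k ≤ n + 1) {j : Fin (n + 1)} (hj : n + 1 ≤ k + j) :
    X.δ j.succ (hornFillerAux X n k x) = x j := by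
  induction k generalizing j with
  | zero => omega
  | succ k ih =>
    set m : Fin (n + 1) := ⟨n - k, by omega⟩
    change X.δ j.succ (hornFillerAux X n k x + X.σ m (x m - X.δ m.succ (hornFillerAux X n k x)))
      = x j
    have hm : (m : ℕ) = n - k := rfl
    obtain hjm | hmj : j = m ∨ m < j := by
      rw [Fin.ext_iff, Fin.lt_def]
      omega
    · rw [hjm, δ_succ_add_σ_sub_δ_succ]
    · have hy := ih (by omega) (j := j) (by rw [Fin.lt_def] at hmj; omega)
      obtain ⟨N, rfl⟩ : ∃ N, n = N + 1 := ⟨n - 1, by have := j.isLt; omega⟩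
      rw [map_add, hy, δ_succ_σ_sub_δ_succ_eq_zero hx hmj hy, add_zero]

lemma hornMap0_hornFiller : Function.RightInverse (hornFiller X n) (hornMap0 X n) := by
  intro z
  ext j
  exact δ_succ_hornFillerAux z.2 le_rfl (by omega)

variable (X n)

lemma ker_hornMap0 : (hornMap0 X n).ker = mooreGroup0 X n := by
  ext y
  rw [AddMonoidHom.mem_ker, ← segalMap0_eq_zero_iff, ← Subtype.coe_inj]
  rfl

end Filler

/-- For a simplicial abelian group `X` and `n ≥ 1` (here `n+1`), the Segal map
`p : X_{n+1} → X_{Λ₀^{n+1}}`, `x ↦ (d_1 x, …, d_{n+1} x)`, is a split surjection of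
abelian groups onto the horn group, with kernel `⋂_{i=1}^{n+1} ker dᵢ`; in
particular `X_{n+1} ≅ (⋂_{i=1}^{n+1} ker dᵢ) ⊕ X_{Λ₀^{n+1}}`. -/
theorem stmt_15 (X : SimplicialObject AddCommGrpCat) (n : ℕ) :
    (∀ y : X.obj (op ⦋n + 1⦌), segalMap0 X n y ∈ hornGroup0 X n) ∧
    (∃ f : hornGroup0 X n →+ X.obj (op ⦋n + 1⦌),
      ∀ z : hornGroup0 X n, segalMap0 X n (f z) = (z : Fin (n + 1) → X.obj (op ⦋n⦌))) ∧
    (∀ y : X.obj (op ⦋n + 1⦌), segalMap0 X n y = 0 ↔ y ∈ mooreGroup0 X n) ∧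
    Nonempty ((X.obj (op ⦋n + 1⦌) : Type _) ≃+ (↥(mooreGroup0 X n) × ↥(hornGroup0 X n))) :=
  ⟨segalMap0_mem_hornGroup0 X n,
    ⟨hornFiller X n, fun z => congrArg Subtype.val (hornMap0_hornFiller z)⟩,
    segalMap0_eq_zero_iff X n,
    ⟨((hornMap0 X n).kerProdEquivOfRightInverse _ hornMap0_hornFiller).trans
      ((AddEquiv.addSubgroupCongr (ker_hornMap0 X n)).prodCongr (AddEquiv.refl _))⟩⟩
end
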